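/- arXiv:math/0507410 — 2 statements merged into one kernel-verified Lean document; each statement's English description precedes it below -/
import Mathlib

section
/- For ν, μ ∈ K with ν ≠ μ, the idempotents ξ_ν and ξ_μ of K[S₃] generate distinct minimal right ideals: ξ_ν·K[S₃] ≠ ξ_μ·K[S₃]. -/
/-!
A finite computation in `K[S₃]` gives `ξ_μ ξ_ν = ξ_μ` for all `μ, ν`.
Taking `ν = μ`, each `ξ_μ` is idempotent, so it acts as the identity on its right ideal. Hence if
`ξ_ν ∈ ξ_μ K[S₃]`, then `ξ_ν = ξ_μ ξ_ν = ξ_μ`, and comparing coefficients at `[1,3,2]` gives `ν = μ`.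
-/

open MonoidAlgebra

/-- The permutation `[1,3,2]`. -/
def p132 : Equiv.Perm (Fin 3) := Equiv.swap 1 2
/-- The permutation `[2,1,3]`. -/
def p213 : Equiv.Perm (Fin 3) := Equiv.swap 0 1
/-- The permutation `[2,3,1]`, sending `1↦2, 2↦3, 3↦1`. -/
def p231 : Equiv.Perm (Fin 3) := Equiv.swap 0 2 * Equiv.swap 0 1
/-- The permutation `[3,1,2]`, sending `1↦3, 2↦1, 3↦2`. -/
def p312 : Equiv.Perm (Fin 3) := Equiv.swap 0 1 * Equiv.swap 0 2
/-- The permutation `[3,2,1]`. -/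
def p321 : Equiv.Perm (Fin 3) := Equiv.swap 0 2

/-- `ξ_ν = (1/3)( e + ν·[1,3,2] + (1−ν)·[2,1,3] − ν·[2,3,1] + (ν−1)·[3,1,2] − [3,2,1] )`. -/
noncomputable def xiNu {K : Type*} [Field K] (ν : K) : MonoidAlgebra K (Equiv.Perm (Fin 3)) :=
  single 1 (1 / 3) + single p132 (ν / 3) + single p213 ((1 - ν) / 3)
    + single p231 (-(ν / 3)) + single p312 ((ν - 1) / 3) + single p321 (-(1 / 3))

theorem IsIdempotentElem.mul_eq_of_dvd {S : Type*} [Semigroup S] {e x : S}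
    (he : IsIdempotentElem e) (h : e ∣ x) : e * x = x := by
  obtain ⟨a, rfl⟩ := h
  rw [← mul_assoc, he.eq]

theorem perm_fin_three_cases (g : Equiv.Perm (Fin 3)) :
    g = 1 ∨ g = p132 ∨ g = p213 ∨ g = p231 ∨ g = p312 ∨ g = p321 := by
  revert g
  decide

section XiNu

variable {K : Type*} [Field K]

theorem xiNu_mul_xiNu [NeZero (3 : K)] (μ ν : K) : xiNu μ * xiNu ν = xiNu μ := by
  ext g
  simp only [xiNu, add_mul, mul_add, single_mul_single, coeff_add, coeff_single,
    Finsupp.add_apply, Finsupp.single_apply]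
  rcases perm_fin_three_cases g with rfl | rfl | rfl | rfl | rfl | rfl <;>
    simp +decide only [ite_true, ite_false, add_zero, zero_add] <;>
    field_simp <;> ring

theorem isIdempotentElem_xiNu [NeZero (3 : K)] (μ : K) : IsIdempotentElem (xiNu μ) :=
  xiNu_mul_xiNu μ μ

theorem xiNu_coeff_p132 (ν : K) : (xiNu ν).coeff p132 = ν / 3 := by
  simp +decide only [xiNu, coeff_add, coeff_single, Finsupp.add_apply, Finsupp.single_apply,
    ite_true, ite_false, add_zero, zero_add]

theorem xiNu_injective [NeZero (3 : K)] :
    Function.Injective (xiNu : K → MonoidAlgebra K (Equiv.Perm (Fin 3))) := by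
  intro ν μ h
  simpa [xiNu_coeff_p132, div_left_inj' (three_ne_zero (α := K))] using
    congrArg (fun x => x.coeff p132) h

end XiNu

/-- For `ν ≠ μ`, the idempotents `ξ_ν` and `ξ_μ` generate distinct (minimal) right ideals
of `K[S₃]`: `ξ_ν·K[S₃] ≠ ξ_μ·K[S₃]`. -/
theorem xiNu_distinct_right_ideals {K : Type*} [Field K] [CharZero K] (ν μ : K) (h : ν ≠ μ) :
    {x : MonoidAlgebra K (Equiv.Perm (Fin 3)) | ∃ a, x = xiNu ν * a} ≠
      {x : MonoidAlgebra K (Equiv.Perm (Fin 3)) | ∃ a, x = xiNu μ * a} := by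
  intro hideals
  have hdvd : xiNu μ ∣ xiNu ν := by
    have hself : xiNu ν ∈ {x | ∃ a, x = xiNu ν * a} := dvd_refl (xiNu ν)
    rwa [hideals] at hself
  refine h (xiNu_injective ?_)
  calc xiNu ν = xiNu μ * xiNu ν := ((isIdempotentElem_xiNu μ).mul_eq_of_dvd hdvd).symm
    _ = xiNu μ := xiNu_mul_xiNu μ ν
end

section
/- A 5-linear form T on a finite-dimensional real vector space is an algebraic covariant derivative curvature tensor if and only if y_{t'}* T = 24·T, where y_{t'} is the Young symmetrizer of the standard tableau of shape (3,2) with rows (1,3,5),(2,4). -/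
/-!
Unwinding the definitions, `(y_{t'}* T)(v) = Σ_q sgn q Σ_p T(v ∘ q ∘ p)` with `p` in the row
group and `q` in the column group: a row symmetrization followed by a column antisymmetrization.

If `T` is an algebraic covariant derivative curvature tensor, pair symmetry identifies the two
halves of the row sum, and the remaining 24 terms are sorted by the vector in the last slot.
The first Bianchi identity, in the form `T(z,y,x,w,u) - T(z,x,y,w,u) = T(x,y,z,w,u)`, reduces
the three groups to `6 T(v)`, `3 (T(v₀,v₁,v₄,v₃,v₂) - T(v₀,v₁,v₄,v₂,v₃))` and a similar term,
and the second Bianchi identity turns each of the latter two into `3 T(v)`; doubling gives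
`24 T(v)`.

Conversely, `y_{t'}* T'` satisfies the four identities for every 5-linear form `T'` (each is an
identity between the 48 terms of the expansion), so `T = y_{t'}* T / 24` does too.
-/

open MonoidAlgebra

/-- Horizontal permutations of the tableau `t'` with rows `{1,3,5}`, `{2,4}` (0-indexed
`{0,2,4}`, `{1,3}`). -/
def isHoriz' (p : Equiv.Perm (Fin 5)) : Prop :=
  (∀ i ∈ ({0, 2, 4} : Finset (Fin 5)), p i ∈ ({0, 2, 4} : Finset (Fin 5))) ∧
  (∀ i ∈ ({1, 3} : Finset (Fin 5)), p i ∈ ({1, 3} : Finset (Fin 5)))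

/-- Vertical permutations of `t'`: preserving the columns `{1,2}`, `{3,4}`, `{5}`
(0-indexed `{0,1}`, `{2,3}`, `{4}`). -/
def isVert' (q : Equiv.Perm (Fin 5)) : Prop :=
  (∀ i ∈ ({0, 1} : Finset (Fin 5)), q i ∈ ({0, 1} : Finset (Fin 5))) ∧
  (∀ i ∈ ({2, 3} : Finset (Fin 5)), q i ∈ ({2, 3} : Finset (Fin 5))) ∧
  q 4 = 4

instance : DecidablePred isHoriz' := fun p => by unfold isHoriz'; infer_instance
instance : DecidablePred isVert' := fun q => by unfold isVert'; infer_instance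

/-- `y_{t'}* = Σ_{p∈H_{t'}} Σ_{q∈V_{t'}} sign(q)·(p∘q)⁻¹ ∈ ℝ[S₅]`. -/
noncomputable def ytStar' : MonoidAlgebra ℝ (Equiv.Perm (Fin 5)) :=
  ∑ p ∈ Finset.univ.filter isHoriz', ∑ q ∈ Finset.univ.filter isVert',
    single (p * q)⁻¹ ((Equiv.Perm.sign q : ℤ) : ℝ)

/-- The action `(aT)(v₁,…,v₅) = Σ_p a(p)·T(v_{p(1)},…,v_{p(5)})` of `ℝ[S₅]` on 5-linear
forms. -/
noncomputable def act {V : Type*} [AddCommGroup V] [Module ℝ V]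
    (a : MonoidAlgebra ℝ (Equiv.Perm (Fin 5)))
    (T : MultilinearMap ℝ (fun _ : Fin 5 => V) ℝ) (v : Fin 5 → V) : ℝ :=
  a.coeff.sum fun p c => c * T (fun i => v (p i))

open Equiv Finset
open scoped Pointwise

section Action

variable {V : Type*} [AddCommGroup V] [Module ℝ V]
  (T : MultilinearMap ℝ (fun _ : Fin 5 => V) ℝ) (v : Fin 5 → V)

theorem act_single (g : Perm (Fin 5)) (c : ℝ) :
    act (single g c) T v = c * T (fun i => v (g i)) :=
  Finsupp.sum_single_index (zero_mul _)

theorem act_sum {ι : Type*} (s : Finset ι) (a : ι → MonoidAlgebra ℝ (Perm (Fin 5))) :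
    act (∑ i ∈ s, a i) T v = ∑ i ∈ s, act (a i) T v := by
  rw [act, coeff_sum]
  exact (Finsupp.sum_finsetSum_index (fun _ => zero_mul _) (fun _ _ _ => add_mul _ _ _)).symm

end Action

section Symmetrizers

variable {V : Type*}

def symFirstRow (T : (Fin 5 → V) → ℝ) (a b c d e : V) : ℝ :=
  T ![a, b, c, d, e] + T ![c, b, a, d, e] + T ![a, b, e, d, c] + T ![e, b, a, d, c] +
    T ![c, b, e, d, a] + T ![e, b, c, d, a]

def rowSym (T : (Fin 5 → V) → ℝ) (a b c d e : V) : ℝ :=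
  symFirstRow T a b c d e + symFirstRow T a d c b e

theorem filter_isHoriz'_eq : univ.filter isHoriz' =
    {1, swap 0 2, swap 0 4, swap 2 4, swap 0 2 * swap 2 4, swap 2 4 * swap 0 2,
      swap 1 3, swap 0 2 * swap 1 3, swap 0 4 * swap 1 3, swap 2 4 * swap 1 3,
      swap 0 2 * swap 2 4 * swap 1 3, swap 2 4 * swap 0 2 * swap 1 3} := by
  decide

theorem filter_isVert'_eq :
    univ.filter isVert' = {1, swap 2 3, swap 0 1, swap 0 1 * swap 2 3} := by
  decide

theorem inv_filter_isHoriz' : (univ.filter isHoriz')⁻¹ = univ.filter isHoriz' := by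
  rw [filter_isHoriz'_eq]; decide

theorem inv_filter_isVert' : (univ.filter isVert')⁻¹ = univ.filter isVert' := by
  rw [filter_isVert'_eq]; decide

variable [AddCommGroup V] [Module ℝ V] (T : MultilinearMap ℝ (fun _ : Fin 5 => V) ℝ)

theorem sum_filter_isHoriz' (w : Fin 5 → V) :
    ∑ p ∈ univ.filter isHoriz', T (fun i => w (p i)) =
      rowSym T (w 0) (w 1) (w 2) (w 3) (w 4) := by
  have hw (p : Perm (Fin 5)) :
      (fun i => w (p i)) = ![w (p 0), w (p 1), w (p 2), w (p 3), w (p 4)] :=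
    funext fun i => by fin_cases i <;> rfl
  rw [filter_isHoriz'_eq]
  simp (disch := decide) only [sum_insert, sum_singleton, hw, Perm.mul_apply,
    swap_apply_left, swap_apply_right, swap_apply_of_ne_of_ne, Perm.one_apply, rowSym,
    symFirstRow]
  abel

theorem act_ytStar'_eq_sum (v : Fin 5 → V) :
    act ytStar' T v = ∑ q ∈ univ.filter isVert',
      (Perm.sign q : ℝ) * rowSym T (v (q 0)) (v (q 1)) (v (q 2)) (v (q 3)) (v (q 4)) := by
  simp only [ytStar', act_sum, act_single]
  conv_lhs =>
    rw [← inv_filter_isHoriz', sum_inv_index, sum_comm, ← inv_filter_isVert', sum_inv_index]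
  refine sum_congr rfl fun q _ => ?_
  simp only [← sum_filter_isHoriz' T (fun i => v (q i)), mul_sum, mul_inv_rev, inv_inv,
    Perm.sign_inv, Perm.mul_apply]

theorem act_ytStar'_eq_rowSym (v : Fin 5 → V) :
    act ytStar' T v =
      rowSym T (v 0) (v 1) (v 2) (v 3) (v 4) - rowSym T (v 0) (v 1) (v 3) (v 2) (v 4) -
        rowSym T (v 1) (v 0) (v 2) (v 3) (v 4) + rowSym T (v 1) (v 0) (v 3) (v 2) (v 4) := by
  rw [act_ytStar'_eq_sum, filter_isVert'_eq]
  simp (disch := decide) only [sum_insert, sum_singleton, Perm.mul_apply, swap_apply_left,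
    swap_apply_right, swap_apply_of_ne_of_ne, Perm.one_apply, Perm.sign_mul, Perm.sign_swap,
    Perm.sign_one]
  push_cast
  ring

end Symmetrizers

structure IsCovDerivCurvatureTensor {V : Type*} (T : (Fin 5 → V) → ℝ) : Prop where
  antisymm : ∀ x y z w u, T ![x, y, z, w, u] = -T ![y, x, z, w, u]
  pair_symm : ∀ x y z w u, T ![x, y, z, w, u] = T ![z, w, x, y, u]
  first_bianchi : ∀ x y z w u, T ![x, y, z, w, u] + T ![x, z, w, y, u] + T ![x, w, y, z, u] = 0
  second_bianchi : ∀ x y z w u, T ![x, y, z, w, u] + T ![x, y, w, u, z] + T ![x, y, u, z, w] = 0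

namespace IsCovDerivCurvatureTensor

variable {V : Type*} {T : (Fin 5 → V) → ℝ}

theorem antisymm_right (hT : IsCovDerivCurvatureTensor T) (x y z w u : V) :
    T ![x, y, z, w, u] = -T ![x, y, w, z, u] := by
  rw [hT.pair_symm, hT.antisymm, hT.pair_symm w]

theorem first_bianchi_sub (hT : IsCovDerivCurvatureTensor T) (x y z w u : V) :
    T ![z, y, x, w, u] - T ![z, x, y, w, u] = T ![x, y, z, w, u] := by
  linear_combination hT.first_bianchi z y x w u - hT.antisymm_right z x w y u -
    hT.pair_symm z w y x u - hT.antisymm y x z w u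

theorem first_bianchi_sub' (hT : IsCovDerivCurvatureTensor T) (x y z w u : V) :
    T ![x, y, z, w, u] - T ![w, y, z, x, u] = T ![z, y, x, w, u] := by
  linear_combination hT.pair_symm x y z w u - hT.pair_symm w y z x u -
    hT.antisymm_right z x w y u + hT.first_bianchi z y w x u - hT.antisymm_right z y w x u

theorem second_bianchi_sub (hT : IsCovDerivCurvatureTensor T) (x y z w u : V) :
    T ![x, y, u, w, z] - T ![x, y, u, z, w] = T ![x, y, z, w, u] := by
  linear_combination -hT.second_bianchi x y z w u + hT.antisymm_right x y w u z

theorem second_bianchi_sub' (hT : IsCovDerivCurvatureTensor T) (x y z w u : V) :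
    T ![u, y, z, w, x] - T ![u, x, z, w, y] = T ![x, y, z, w, u] := by
  linear_combination hT.pair_symm u y z w x - hT.pair_symm u x z w y -
    hT.second_bianchi z w x y u + hT.antisymm_right z w u y x + hT.pair_symm z w x y u

theorem const_mul (hT : IsCovDerivCurvatureTensor T) (c : ℝ) :
    IsCovDerivCurvatureTensor (fun v => c * T v) where
  antisymm x y z w u := by rw [hT.antisymm]; ring
  pair_symm x y z w u := by rw [hT.pair_symm]
  first_bianchi x y z w u := by linear_combination c * hT.first_bianchi x y z w u
  second_bianchi x y z w u := by linear_combination c * hT.second_bianchi x y z w u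

theorem rowSym_eq (hT : IsCovDerivCurvatureTensor T) (a b c d e : V) :
    rowSym T a b c d e = 2 * symFirstRow T a b c d e := by
  unfold rowSym symFirstRow
  linear_combination hT.pair_symm a d c b e + hT.pair_symm c d a b e + hT.pair_symm a d e b c +
    hT.pair_symm e d a b c + hT.pair_symm c d e b a + hT.pair_symm e d c b a

theorem alternating_symFirstRow (hT : IsCovDerivCurvatureTensor T) (a b c d e : V) :
    symFirstRow T a b c d e - symFirstRow T a b d c e - symFirstRow T b a c d e +
      symFirstRow T b a d c e = 12 * T ![a, b, c, d, e] := by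
  have last_e : T ![a, b, c, d, e] - T ![a, b, d, c, e] - T ![b, a, c, d, e] + T ![b, a, d, c, e] +
      T ![c, b, a, d, e] - T ![d, b, a, c, e] - T ![c, a, b, d, e] + T ![d, a, b, c, e] =
        6 * T ![a, b, c, d, e] := by
    linear_combination -3 * hT.antisymm_right a b c d e - hT.antisymm b a c d e +
      2 * hT.antisymm b a d c e + hT.first_bianchi_sub a b c d e + hT.first_bianchi_sub b a d c e
  have last_cd : T ![a, b, e, d, c] - T ![a, b, e, c, d] - T ![b, a, e, d, c] + T ![b, a, e, c, d] +
      T ![e, b, a, d, c] - T ![e, b, a, c, d] - T ![e, a, b, d, c] + T ![e, a, b, c, d] =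
        3 * T ![a, b, c, d, e] := by
    linear_combination hT.first_bianchi_sub a b e d c + hT.first_bianchi_sub b a e c d -
      hT.antisymm b a e d c + 2 * hT.antisymm b a e c d + 3 * hT.second_bianchi_sub a b c d e
  have last_ab : T ![c, b, e, d, a] - T ![d, b, e, c, a] - T ![c, a, e, d, b] + T ![d, a, e, c, b] +
      T ![e, b, c, d, a] - T ![e, b, d, c, a] - T ![e, a, c, d, b] + T ![e, a, d, c, b] =
        3 * T ![a, b, c, d, e] := by
    linear_combination hT.first_bianchi_sub' c b e d a + hT.first_bianchi_sub' d a e c b -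
      hT.antisymm_right e b d c a + 2 * hT.antisymm_right e a d c b +
      3 * hT.second_bianchi_sub' a b c d e
  unfold symFirstRow
  linear_combination last_e + last_cd + last_ab

end IsCovDerivCurvatureTensor

section Young

variable {V : Type*} [AddCommGroup V] [Module ℝ V]

theorem IsCovDerivCurvatureTensor.act_ytStar'_eq {T : MultilinearMap ℝ (fun _ : Fin 5 => V) ℝ}
    (hT : IsCovDerivCurvatureTensor T) (v : Fin 5 → V) : act ytStar' T v = 24 * T v := by
  have hv : ![v 0, v 1, v 2, v 3, v 4] = v := by ext i; fin_cases i <;> rfl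
  rw [act_ytStar'_eq_rowSym, hT.rowSym_eq, hT.rowSym_eq, hT.rowSym_eq, hT.rowSym_eq]
  conv_rhs => rw [← hv]
  linear_combination 2 * hT.alternating_symFirstRow (v 0) (v 1) (v 2) (v 3) (v 4)

theorem isCovDerivCurvatureTensor_act_ytStar' (T : MultilinearMap ℝ (fun _ : Fin 5 => V) ℝ) :
    IsCovDerivCurvatureTensor (act ytStar' T) := by
  constructor <;> intros <;>
    simp only [act_ytStar'_eq_rowSym, rowSym, symFirstRow, Matrix.cons_val] <;> ring

end Young

theorem algebraic_covariant_derivative_curvature_tensor_iff_young_general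
    {V : Type*} [AddCommGroup V] [Module ℝ V]
    (T : MultilinearMap ℝ (fun _ : Fin 5 => V) ℝ) :
    ((∀ x y z w u, T ![x, y, z, w, u] = -T ![y, x, z, w, u]) ∧
     (∀ x y z w u, T ![x, y, z, w, u] = T ![z, w, x, y, u]) ∧
     (∀ x y z w u, T ![x, y, z, w, u] + T ![x, z, w, y, u] + T ![x, w, y, z, u] = 0) ∧
     (∀ x y z w u, T ![x, y, z, w, u] + T ![x, y, w, u, z] + T ![x, y, u, z, w] = 0)) ↔
    (∀ v : Fin 5 → V, act ytStar' T v = 24 * T v) := by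
  constructor
  · rintro ⟨h₁, h₂, h₃, h₄⟩
    exact IsCovDerivCurvatureTensor.act_ytStar'_eq ⟨h₁, h₂, h₃, h₄⟩
  · intro h
    have hT : (fun v => 24⁻¹ * act ytStar' T v) = ⇑T := funext fun v => by rw [h]; ring
    obtain ⟨h₁, h₂, h₃, h₄⟩ := hT ▸ (isCovDerivCurvatureTensor_act_ytStar' T).const_mul 24⁻¹
    exact ⟨h₁, h₂, h₃, h₄⟩

/-- A 5-linear form `T` on a finite-dimensional real vector space is an algebraic
covariant derivative curvature tensor if and only if `y_{t'}* T = 24·T`, where `y_{t'}`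
is the Young symmetrizer of the standard tableau of shape `(3,2)` with rows `(1,3,5)`,
`(2,4)`. -/
theorem algebraic_covariant_derivative_curvature_tensor_iff_young
    {V : Type*} [AddCommGroup V] [Module ℝ V] [FiniteDimensional ℝ V]
    (T : MultilinearMap ℝ (fun _ : Fin 5 => V) ℝ) :
    ((∀ x y z w u, T ![x, y, z, w, u] = -T ![y, x, z, w, u]) ∧
     (∀ x y z w u, T ![x, y, z, w, u] = T ![z, w, x, y, u]) ∧
     (∀ x y z w u, T ![x, y, z, w, u] + T ![x, z, w, y, u] + T ![x, w, y, z, u] = 0) ∧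
     (∀ x y z w u, T ![x, y, z, w, u] + T ![x, y, w, u, z] + T ![x, y, u, z, w] = 0)) ↔
    (∀ v : Fin 5 → V, act ytStar' T v = 24 * T v) :=
  algebraic_covariant_derivative_curvature_tensor_iff_young_general T
end
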